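/- arXiv:1104.4415 — 3 statements merged into one kernel-verified Lean document; each statement's English description precedes it below -/
import Mathlib

section
/- Let d ≥ 1 and let G = (V, E) be a d-sparse finite graph. If H₁ = (U₁, F₁) and H₂ = (U₂, F₂) are distinct d-critical components of G, then |U₁ ∩ U₂| ≤ d − 1, and if |U₁ ∩ U₂| = d − 1 then i_G(U₁ ∩ U₂) = binom(d−1, 2), i.e. U₁ ∩ U₂ induces a complete subgraph of G. -/
open Finset
open scoped Classical

variable {α : Type*} [DecidableEq α]

/-- The set of edges of `E` with both endpoints in `X`. -/
noncomputable def inducedEdges (E : Finset (Sym2 α)) (X : Finset α) : Finset (Sym2 α) :=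
  E.filter fun e => ∀ v ∈ e, v ∈ X

/-- `i_G(X)`: the number of edges of `E` with both endpoints in `X`. -/
noncomputable def iG (E : Finset (Sym2 α)) (X : Finset α) : ℕ :=
  (inducedEdges E X).card

/-- `E` is a valid edge set on the vertex set `V`: edges are loopless and join vertices of `V`. -/
def ValidOn (V : Finset α) (E : Finset (Sym2 α)) : Prop :=
  ∀ e ∈ E, ¬ e.IsDiag ∧ ∀ v ∈ e, v ∈ V

/-- The graph `(V, E)` is `d`-sparse: every `X ⊆ V` with `|X| ≥ d` satisfies
`i(X) ≤ d|X| - (d+1 choose 2)`. -/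
noncomputable def Sparse (d : ℕ) (V : Finset α) (E : Finset (Sym2 α)) : Prop :=
  ∀ X ⊆ V, d ≤ X.card → iG E X + Nat.choose (d + 1) 2 ≤ d * X.card

/-- `(U, F)` is a subgraph of `(V, E)`. -/
def IsSubgraph (V : Finset α) (E : Finset (Sym2 α)) (U : Finset α) (F : Finset (Sym2 α)) :
    Prop :=
  U ⊆ V ∧ F ⊆ E ∧ ∀ e ∈ F, ∀ v ∈ e, v ∈ U

/-- The graph `(U, F)` is `d`-critical: either `|U| = 2` and `|F| = 1`, or `|U| ≥ d + 2` and
`|F| = d|U| - (d+1 choose 2)`. -/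
def Critical (d : ℕ) (U : Finset α) (F : Finset (Sym2 α)) : Prop :=
  (U.card = 2 ∧ F.card = 1) ∨
  (d + 2 ≤ U.card ∧ F.card + Nat.choose (d + 1) 2 = d * U.card)

/-- `(U, F)` is a `d`-critical subgraph of `(V, E)`. -/
def CritSubgraph (d : ℕ) (V : Finset α) (E : Finset (Sym2 α)) (U : Finset α)
    (F : Finset (Sym2 α)) : Prop :=
  IsSubgraph V E U F ∧ Critical d U F

/-- `(U, F)` is a `d`-critical component of `(V, E)`: a `d`-critical subgraph not properly
contained in any other `d`-critical subgraph. -/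
def CritComponent (d : ℕ) (V : Finset α) (E : Finset (Sym2 α)) (U : Finset α)
    (F : Finset (Sym2 α)) : Prop :=
  CritSubgraph d V E U F ∧
  ∀ U' F', CritSubgraph d V E U' F' → U ⊆ U' → F ⊆ F' → U = U' ∧ F = F'

/-- The `d`-critical cover of `(V, E)`: the family of vertex sets of its `d`-critical
components. -/
noncomputable def critCover (d : ℕ) (V : Finset α) (E : Finset (Sym2 α)) :
    Finset (Finset α) :=
  V.powerset.filter fun U => ∃ F, CritComponent d V E U F

/-- `d_𝒳(W)`: the number of members of the family `𝒳` containing `W`. -/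
def degX (𝒳 : Finset (Finset α)) (W : Finset α) : ℕ :=
  (𝒳.filter fun X => W ⊆ X).card

/-- `Θ_k(𝒳)`: the set of `k`-hinges of `𝒳`, i.e. `k`-element subsets of `V` lying in at least
two members of `𝒳`.  (For `k = 0` this is `{∅}` exactly when `|𝒳| ≥ 2`.) -/
noncomputable def theta (V : Finset α) (𝒳 : Finset (Finset α)) (k : ℕ) :
    Finset (Finset α) :=
  V.powerset.filter fun W => W.card = k ∧ 2 ≤ degX 𝒳 W

/-- `𝒳` is a cover of `(V, E)`: every member has at least two vertices and every edge is
induced by some member. -/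
def IsCover (E : Finset (Sym2 α)) (𝒳 : Finset (Finset α)) : Prop :=
  (∀ X ∈ 𝒳, 2 ≤ X.card) ∧ ∀ e ∈ E, ∃ X ∈ 𝒳, ∀ v ∈ e, v ∈ X

/-- `𝒳` is `t`-thin: any two distinct members intersect in at most `t` vertices. -/
def Thin (t : ℕ) (𝒳 : Finset (Finset α)) : Prop :=
  ∀ X ∈ 𝒳, ∀ Y ∈ 𝒳, X ≠ Y → (X ∩ Y).card ≤ t

/-- `(V, F)` is a maximal `d`-sparse (spanning) subgraph of `(V, E)`. -/
noncomputable def MaxSparse (d : ℕ) (V : Finset α) (E F : Finset (Sym2 α)) : Prop :=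
  F ⊆ E ∧ Sparse d V F ∧ ∀ e ∈ E, e ∉ F → ¬ Sparse d V (insert e F)

/-!
A critical subgraph of a `d`-sparse graph is induced, and unless it is a single edge with
`d ≥ 3` it is tight: `i(U) = d|U| - binom(d+1, 2)`. Since `i` is supermodular, two tight sets
whose intersection `I` satisfies the sparsity count have a tight union, which is then a larger
critical subgraph, contradicting maximality of the components. Hence `I` violates the count:
this excludes `|I| ≥ d`, and for `|I| = d - 1` it forces
`i(I) > d(d-1) - binom(d+1, 2) = binom(d-1, 2) - 1`.
-/
omit [DecidableEq α] in
lemma inducedEdges_mono (E : Finset (Sym2 α)) {X Y : Finset α} (h : X ⊆ Y) :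
    inducedEdges E X ⊆ inducedEdges E Y :=
  Finset.monotone_filter_right E fun _ _ hX v hv => h (hX v hv)

lemma inducedEdges_inter (E : Finset (Sym2 α)) (X Y : Finset α) :
    inducedEdges E (X ∩ Y) = inducedEdges E X ∩ inducedEdges E Y := by
  ext e
  simp only [inducedEdges, mem_filter, mem_inter]
  grind

lemma iG_add_iG_le_iG_union_add_iG_inter (E : Finset (Sym2 α)) (X Y : Finset α) :
    iG E X + iG E Y ≤ iG E (X ∪ Y) + iG E (X ∩ Y) := by
  rw [iG, iG, iG, iG, inducedEdges_inter, ← card_union_add_card_inter]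
  gcongr
  exact union_subset (inducedEdges_mono E subset_union_left)
    (inducedEdges_mono E subset_union_right)

lemma ValidOn.iG_le_choose {V : Finset α} {E : Finset (Sym2 α)} (hval : ValidOn V E)
    (X : Finset α) : iG E X ≤ X.card.choose 2 := by
  rw [iG, ← Sym2.card_image_offDiag]
  refine card_le_card fun e he => ?_
  obtain ⟨heE, heX⟩ := mem_filter.1 he
  induction e using Sym2.ind with
  | _ a b =>
    have hab : a ≠ b := Sym2.mk_isDiag_iff.not.1 (hval _ heE).1
    exact mem_image.2 ⟨(a, b), mem_offDiag.2 ⟨heX a (Sym2.mem_mk_left a b),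
      heX b (Sym2.mem_mk_right a b), hab⟩, rfl⟩

lemma choose_two_succ_add_choose_two_pred {d : ℕ} (hd : 1 ≤ d) :
    (d + 1).choose 2 + (d - 1).choose 2 = d * (d - 1) + 1 := by
  qify [hd]
  rw [Nat.cast_choose_two, Nat.cast_choose_two]
  push_cast [hd]
  ring

def IsTight (d : ℕ) (E : Finset (Sym2 α)) (X : Finset α) : Prop :=
  iG E X + (d + 1).choose 2 = d * X.card

section

variable {d : ℕ} {V : Finset α} {E : Finset (Sym2 α)}

lemma Sparse.isTight_union (hsp : Sparse d V E) {X Y : Finset α} (hX : X ⊆ V) (hY : Y ⊆ V)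
    (htX : IsTight d E X) (htY : IsTight d E Y)
    (hXY : iG E (X ∩ Y) + (d + 1).choose 2 ≤ d * (X ∩ Y).card) (hcard : d ≤ (X ∪ Y).card) :
    IsTight d E (X ∪ Y) := by
  have hsparse := hsp _ (union_subset hX hY) hcard
  have hsuper := iG_add_iG_le_iG_union_add_iG_inter E X Y
  have hmul : d * (X ∪ Y).card + d * (X ∩ Y).card = d * X.card + d * Y.card := by
    rw [← mul_add, ← mul_add, card_union_add_card_inter]
  unfold IsTight at *
  omega

omit [DecidableEq α] in
lemma IsSubgraph.subset_inducedEdges {U : Finset α} {F : Finset (Sym2 α)}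
    (h : IsSubgraph V E U F) : F ⊆ inducedEdges E U :=
  fun e he => mem_filter.2 ⟨h.2.1 he, h.2.2 e he⟩

lemma CritSubgraph.eq_inducedEdges (hval : ValidOn V E) (hsp : Sparse d V E) {U : Finset α}
    {F : Finset (Sym2 α)} (h : CritSubgraph d V E U F) : F = inducedEdges E U := by
  refine eq_of_subset_of_card_le h.1.subset_inducedEdges ?_
  rcases h.2 with ⟨hU, hF⟩ | ⟨hU, hF⟩
  · simpa [iG, hU, hF] using hval.iG_le_choose U
  · have hsparse := hsp U h.1.1 (by omega)
    unfold iG at hsparse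
    omega

lemma CritSubgraph.isTight (hd : 1 ≤ d) (hval : ValidOn V E) (hsp : Sparse d V E)
    {U : Finset α} {F : Finset (Sym2 α)} (h : CritSubgraph d V E U F)
    (hdU : d ≤ 2 ∨ 3 ≤ U.card) : IsTight d E U := by
  rw [IsTight, iG, ← h.eq_inducedEdges hval hsp]
  rcases h.2 with ⟨hU, hF⟩ | ⟨-, hF⟩
  · obtain rfl | rfl : d = 1 ∨ d = 2 := by omega
    all_goals simp [hU, hF]
  · exact hF

lemma CritComponent.eq_of_subset (hval : ValidOn V E) (hsp : Sparse d V E)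
    {U₁ U₂ : Finset α} {F₁ F₂ : Finset (Sym2 α)} (h₁ : CritSubgraph d V E U₁ F₁)
    (h₂ : CritComponent d V E U₂ F₂) (hU : U₂ ⊆ U₁) : (U₂, F₂) = (U₁, F₁) := by
  have hF : F₂ ⊆ F₁ := by
    rw [h₁.eq_inducedEdges hval hsp, h₂.1.eq_inducedEdges hval hsp]
    exact inducedEdges_mono E hU
  obtain ⟨rfl, rfl⟩ := h₂.2 U₁ F₁ h₁ hU hF
  rfl

lemma CritComponent.not_subset (hval : ValidOn V E) (hsp : Sparse d V E)
    {U₁ U₂ : Finset α} {F₁ F₂ : Finset (Sym2 α)} (h₁ : CritComponent d V E U₁ F₁)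
    (h₂ : CritComponent d V E U₂ F₂) (hne : (U₁, F₁) ≠ (U₂, F₂)) : ¬ U₁ ⊆ U₂ :=
  fun hU => hne (h₁.eq_of_subset hval hsp h₂.1 hU)

lemma CritComponent.lt_count_inter (hval : ValidOn V E) (hsp : Sparse d V E)
    {U₁ U₂ : Finset α} {F₁ F₂ : Finset (Sym2 α)} (h₁ : CritComponent d V E U₁ F₁)
    (h₂ : CritComponent d V E U₂ F₂) (hne : (U₁, F₁) ≠ (U₂, F₂))
    (ht₁ : IsTight d E U₁) (ht₂ : IsTight d E U₂) (hcard : d + 2 ≤ (U₁ ∪ U₂).card) :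
    d * (U₁ ∩ U₂).card < iG E (U₁ ∩ U₂) + (d + 1).choose 2 := by
  by_contra! hI
  have hV : U₁ ∪ U₂ ⊆ V := union_subset h₁.1.1.1 h₂.1.1.1
  have ht := hsp.isTight_union h₁.1.1.1 h₂.1.1.1 ht₁ ht₂ hI (by omega)
  have hcrit : CritSubgraph d V E (U₁ ∪ U₂) (inducedEdges E (U₁ ∪ U₂)) :=
    ⟨⟨hV, filter_subset _ _, fun e he => (mem_filter.1 he).2⟩, .inr ⟨hcard, ht⟩⟩
  obtain ⟨hU₁, -⟩ := Prod.mk.inj (h₁.eq_of_subset hval hsp hcrit subset_union_left)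
  refine h₂.not_subset hval hsp h₁ hne.symm ?_
  rw [hU₁]
  exact subset_union_right

end

/-- Distinct `d`-critical components of a `d`-sparse graph intersect in at most
`d - 1` vertices, and if they intersect in exactly `d - 1` vertices then the intersection
induces a complete subgraph (`binom(d-1, 2)` edges) of `G`. -/
theorem stmt0 (d : ℕ) (hd : 1 ≤ d) (V : Finset α) (E : Finset (Sym2 α))
    (hval : ValidOn V E) (hsp : Sparse d V E)
    (U₁ U₂ : Finset α) (F₁ F₂ : Finset (Sym2 α))
    (h₁ : CritComponent d V E U₁ F₁) (h₂ : CritComponent d V E U₂ F₂)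
    (hne : (U₁, F₁) ≠ (U₂, F₂)) :
    (U₁ ∩ U₂).card ≤ d - 1 ∧
      ((U₁ ∩ U₂).card = d - 1 → iG E (U₁ ∩ U₂) = Nat.choose (d - 1) 2) := by
  have hI₁ : (U₁ ∩ U₂).card < U₁.card :=
    card_lt_card (inf_lt_left.2 (h₁.not_subset hval hsp h₂ hne))
  have hI₂ : (U₁ ∩ U₂).card < U₂.card :=
    card_lt_card (inf_lt_right.2 (h₂.not_subset hval hsp h₁ hne.symm))
  have hunion := card_union_add_card_inter U₁ U₂
  have key (hdI : d ≤ 2 ∨ 2 ≤ (U₁ ∩ U₂).card) (hcard : d + 2 ≤ (U₁ ∪ U₂).card) :=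
    h₁.lt_count_inter hval hsp h₂ hne (h₁.1.isTight hd hval hsp (by omega))
      (h₂.1.isTight hd hval hsp (by omega)) hcard
  have hsmall : (U₁ ∩ U₂).card ≤ d - 1 := by
    by_contra! hdI
    have hsparse := hsp (U₁ ∩ U₂) (inter_subset_left.trans h₁.1.1.1) (by omega)
    have hcount := key (by omega) (by omega)
    omega
  refine ⟨hsmall, fun hI => le_antisymm (hI ▸ hval.iG_le_choose _) ?_⟩
  rcases le_or_gt d 2 with hd2 | hd3
  · interval_cases d <;> simp
  · have hU₁ : d + 2 ≤ U₁.card := by rcases h₁.1.2 with ⟨h, -⟩ | ⟨h, -⟩ <;> omega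
    have hcount := key (by omega) (by omega)
    have hchoose := choose_two_succ_add_choose_two_pred hd
    rw [hI] at hcount
    omega
end

section
/- Let d ≥ 1, let H = (V, E) be a d-sparse finite graph with d-critical cover 𝒳, let W ∈ Θ_k(𝒳) for some 0 ≤ k ≤ d − 1, let t = d_𝒳(W), let H₁ = (V₁, E₁), …, H_t = (V_t, E_t) be the d-critical components of H whose vertex sets contain W, and suppose each of these has at least d + 2 vertices. Let V' = V₁ ∪ ⋯ ∪ V_t. Then |V'| = Σ_{i=1}^t |V_i| − k(t − 1) − Σ_{U ∈ Θ_{k+1}(𝒳), W ⊂ U} (d_𝒳(U) − 1). -/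
/-! Double counting. Summing `#X` over the members `X` of `𝒳` containing `W` counts each vertex `v`
of their union once for every such member containing `v`, that is `d_𝒳(W ∪ {v})` times. A vertex
of `W` is counted `t` times, and a vertex `v ∉ W` counted at least twice is the same thing as a
`(k + 1)`-hinge `W ∪ {v}` above `W`. -/

open Finset
open scoped Classical

variable {α : Type*} [DecidableEq α]

namespace Finset

theorem sum_card_eq_sum_card_filter_mem (𝒴 : Finset (Finset α)) :
    ∑ X ∈ 𝒴, #X = ∑ v ∈ 𝒴.biUnion id, #{X ∈ 𝒴 | v ∈ X} := by
  calc ∑ X ∈ 𝒴, #X = ∑ X ∈ 𝒴, #((𝒴.biUnion id).bipartiteBelow (· ∈ ·) X) :=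
        sum_congr rfl fun X hX => by
          rw [bipartiteBelow, filter_mem_eq_inter]
          exact congrArg card (inter_eq_right.mpr (subset_biUnion_of_mem id hX)).symm
    _ = _ := (sum_card_bipartiteAbove_eq_sum_card_bipartiteBelow _).symm

theorem card_biUnion_id_eq_sum_card_sub (𝒴 : Finset (Finset α)) :
    (#(𝒴.biUnion id) : ℤ) =
      ∑ X ∈ 𝒴, (#X : ℤ) - ∑ v ∈ 𝒴.biUnion id, ((#{X ∈ 𝒴 | v ∈ X} : ℤ) - 1) := by
  rw [sum_sub_distrib, ← Nat.cast_sum, ← Nat.cast_sum, sum_card_eq_sum_card_filter_mem]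
  simp

end Finset

theorem degX_insert (𝒳 : Finset (Finset α)) (W : Finset α) (v : α) :
    degX 𝒳 (insert v W) = #{X ∈ 𝒳.filter (W ⊆ ·) | v ∈ X} := by
  simp only [degX, filter_filter, insert_subset_iff, and_comm]

theorem card_biUnion_filter_superset (𝒳 : Finset (Finset α)) (W : Finset α) :
    (#((𝒳.filter (W ⊆ ·)).biUnion id) : ℤ) =
      ∑ X ∈ 𝒳.filter (W ⊆ ·), (#X : ℤ) -
        ∑ v ∈ (𝒳.filter (W ⊆ ·)).biUnion id, ((degX 𝒳 (insert v W) : ℤ) - 1) := by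
  simp only [degX_insert]
  exact card_biUnion_id_eq_sum_card_sub _

theorem subset_of_mem_critCover {β : Type*} {d : ℕ} {V : Finset β} {E : Finset (Sym2 β)}
    {X : Finset β} (hX : X ∈ critCover d V E) : X ⊆ V :=
  mem_powerset.mp (mem_filter.mp hX).1

theorem filter_ssuperset_theta_eq_image {V : Finset α} {𝒳 : Finset (Finset α)}
    (h𝒳V : ∀ X ∈ 𝒳, X ⊆ V) {W : Finset α} (hWV : W ⊆ V) :
    (theta V 𝒳 (#W + 1)).filter (W ⊂ ·) =
      (((𝒳.filter (W ⊆ ·)).biUnion id \ W).filter fun v => 2 ≤ degX 𝒳 (insert v W)).image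
        (insert · W) := by
  ext U
  simp only [theta, mem_filter, mem_image, mem_powerset, mem_sdiff, mem_biUnion, id]
  constructor
  · rintro ⟨⟨-, hUcard, hUdeg⟩, hWU⟩
    obtain ⟨v, hvU, hvW⟩ := exists_of_ssubset hWU
    have hU : insert v W = U :=
      eq_of_subset_of_card_le (insert_subset hvU hWU.subset)
        (by rw [card_insert_of_notMem hvW, hUcard])
    obtain ⟨X, hX⟩ := card_pos.mp (zero_lt_two.trans_le hUdeg)
    obtain ⟨hX𝒳, hUX⟩ := mem_filter.mp hX
    exact ⟨v, ⟨⟨⟨X, ⟨hX𝒳, hWU.subset.trans hUX⟩, hUX hvU⟩, hvW⟩, hU ▸ hUdeg⟩, hU⟩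
  · rintro ⟨v, ⟨⟨⟨X, ⟨hX𝒳, -⟩, hvX⟩, hvW⟩, hdeg⟩, rfl⟩
    exact ⟨⟨insert_subset (h𝒳V X hX𝒳 hvX) hWV, card_insert_of_notMem hvW, hdeg⟩,
      ssubset_insert hvW⟩

theorem sum_theta_succ_eq_sum_sdiff {V : Finset α} {𝒳 : Finset (Finset α)}
    (h𝒳V : ∀ X ∈ 𝒳, X ⊆ V) {W : Finset α} (hWV : W ⊆ V) :
    ∑ U ∈ (theta V 𝒳 (#W + 1)).filter (W ⊂ ·), ((degX 𝒳 U : ℤ) - 1) =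
      ∑ v ∈ (𝒳.filter (W ⊆ ·)).biUnion id \ W, ((degX 𝒳 (insert v W) : ℤ) - 1) := by
  rw [filter_ssuperset_theta_eq_image h𝒳V hWV,
    sum_image ((insert_inj_on W).mono fun v hv => (mem_sdiff.mp (mem_filter.mp hv).1).2)]
  refine sum_filter_of_ne fun v hv hne => ?_
  obtain ⟨X, hX, hvX⟩ := mem_biUnion.mp (mem_sdiff.mp hv).1
  have : 0 < degX 𝒳 (insert v W) := by
    rw [degX_insert]
    exact card_pos.mpr ⟨X, mem_filter.mpr ⟨hX, hvX⟩⟩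
  omega

theorem stmt4_general (d k : ℕ)
    (V : Finset α) (E : Finset (Sym2 α))
    (𝒳 : Finset (Finset α)) (h𝒳 : 𝒳 = critCover d V E)
    (W : Finset α) (hW : W ∈ theta V 𝒳 k)
    (t : ℕ) (ht : t = degX 𝒳 W) :
    (((𝒳.filter fun X => W ⊆ X).biUnion id).card : ℤ) =
      (∑ X ∈ 𝒳.filter (fun X => W ⊆ X), (X.card : ℤ)) - k * ((t : ℤ) - 1) -
        ∑ U ∈ (theta V 𝒳 (k + 1)).filter (fun X => W ⊂ X), ((degX 𝒳 U : ℤ) - 1) := by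
  have h𝒳V : ∀ X ∈ 𝒳, X ⊆ V := h𝒳 ▸ fun X => subset_of_mem_critCover
  obtain ⟨hWV, rfl, hWdeg⟩ : W ⊆ V ∧ #W = k ∧ 2 ≤ degX 𝒳 W := by simpa [theta] using hW
  subst ht
  have hWS : W ⊆ (𝒳.filter (W ⊆ ·)).biUnion id := by
    obtain ⟨X, hX⟩ := card_pos.mp (zero_lt_two.trans_le hWdeg)
    exact (mem_filter.mp hX).2.trans (subset_biUnion_of_mem id hX)
  have hW_sum : ∑ v ∈ W, ((degX 𝒳 (insert v W) : ℤ) - 1) = #W * ((degX 𝒳 W : ℤ) - 1) := by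
    rw [sum_congr rfl fun v hv => by rw [insert_eq_of_mem hv], sum_const, nsmul_eq_mul]
  rw [card_biUnion_filter_superset, ← sum_sdiff hWS, hW_sum, sum_theta_succ_eq_sum_sdiff h𝒳V hWV]
  ring

/-- counting the vertices of the union of the critical components containing a
fixed hinge `W` (equation (1) of the paper). -/
theorem stmt4 (d k : ℕ) (hd : 1 ≤ d) (hk : k ≤ d - 1)
    (V : Finset α) (E : Finset (Sym2 α)) (hval : ValidOn V E) (hsp : Sparse d V E)
    (𝒳 : Finset (Finset α)) (h𝒳 : 𝒳 = critCover d V E)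
    (W : Finset α) (hW : W ∈ theta V 𝒳 k)
    (hbig : ∀ U F, CritComponent d V E U F → W ⊆ U → d + 2 ≤ U.card)
    (t : ℕ) (ht : t = degX 𝒳 W) :
    (((𝒳.filter fun X => W ⊆ X).biUnion id).card : ℤ) =
      (∑ X ∈ 𝒳.filter (fun X => W ⊆ X), (X.card : ℤ)) - k * ((t : ℤ) - 1) -
        ∑ U ∈ (theta V 𝒳 (k + 1)).filter (fun X => W ⊂ X), ((degX 𝒳 U : ℤ) - 1) :=
  stmt4_general d k V E 𝒳 h𝒳 W hW t ht
end

section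
/- Let d ≥ 1, let H = (V, E) be a d-sparse finite graph with d-critical cover 𝒳, let W ∈ Θ_k(𝒳) for some 0 ≤ k ≤ d − 1, let t = d_𝒳(W), let H₁ = (V₁, E₁), …, H_t = (V_t, E_t) be the d-critical components of H whose vertex sets contain W, and suppose each of these has at least d + 2 vertices. Let E' = E₁ ∪ ⋯ ∪ E_t. Then |E'| ≥ Σ_{i=1}^t |E_i| − binom(k, 2)(t − 1) − k · Σ_{U ∈ Θ_{k+1}(𝒳), W ⊂ U} (d_𝒳(U) − 1) − Σ_{U ∈ Θ_{k+2}(𝒳), W ⊂ U} (d_𝒳(U) − 1). -/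
open Finset
open scoped Classical

variable {α : Type*} [DecidableEq α]

/-! Every edge `e` of `E'` is counted `m(e) = d_𝒳(W ∪ e)` times in `∑ |E_i|`, so the excess
`∑ |E_i| - |E'|` is `∑_e (m(e) - 1)`.  Charge each edge with `m(e) ≥ 2` to `U = W ∪ e`: either
`U = W` (at most `(k choose 2)` edges, each with `m(e) ≤ t`), or `U` is a `(k+1)`-hinge above `W`
(at most `k` edges `wu`, `w ∈ W`), or a `(k+2)`-hinge above `W` (exactly one edge). -/

lemma sum_card_eq_sum_card_filter_mem {ι β : Type*} [DecidableEq β] (s : Finset ι)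
    (f : ι → Finset β) :
    ∑ i ∈ s, (f i).card = ∑ b ∈ s.biUnion f, (s.filter (b ∈ f ·)).card := by
  simp only [card_eq_sum_ones]
  exact sum_comm' fun i b => by simp only [mem_filter, mem_biUnion]; grind

lemma mem_inducedEdges {E : Finset (Sym2 α)} {X : Finset α} {e : Sym2 α} :
    e ∈ inducedEdges E X ↔ e ∈ E ∧ e.toFinset ⊆ X := by
  simp only [inducedEdges, mem_filter, subset_iff, Sym2.mem_toFinset]

lemma card_filter_mem_inducedEdges (𝒳 : Finset (Finset α)) (W : Finset α)
    {E : Finset (Sym2 α)} {e : Sym2 α} (he : e ∈ E) :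
    ((𝒳.filter (W ⊆ ·)).filter (e ∈ inducedEdges E ·)).card = degX 𝒳 (W ∪ e.toFinset) := by
  simp only [degX, filter_filter, mem_inducedEdges, union_subset_iff, he, true_and]

/-- An edge `e` with `W ∪ e = U` is recovered from `e ∩ W`, a set of `2 - |U \ W|` vertices
of `W`. -/
lemma card_filter_union_toFinset_eq_le {E : Finset (Sym2 α)} (hE : ∀ e ∈ E, ¬ e.IsDiag)
    (W U : Finset α) :
    (E.filter fun e => W ∪ e.toFinset = U).card ≤ W.card.choose (2 - (U \ W).card) := by
  have hsplit : ∀ e : Sym2 α, W ∪ e.toFinset = U → U \ W ∪ e.toFinset ∩ W = e.toFinset := by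
    rintro e rfl
    rw [union_sdiff_left, sdiff_union_inter]
  rw [← card_powersetCard]
  refine card_le_card_of_injOn (fun e => e.toFinset ∩ W) (fun e he => ?_) fun e he f hf hef => ?_
  · obtain ⟨heE, rfl⟩ := mem_filter.mp he
    have h2 := card_sdiff_add_card_inter e.toFinset W
    rw [Sym2.card_toFinset_of_not_isDiag e (hE e heE)] at h2
    rw [mem_coe, mem_powersetCard, union_sdiff_left]
    exact ⟨inter_subset_right, by simp only; omega⟩
  · obtain ⟨-, heU⟩ := mem_filter.mp he
    obtain ⟨-, hfU⟩ := mem_filter.mp hf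
    have h := hsplit e heU
    rw [show e.toFinset ∩ W = f.toFinset ∩ W from hef, hsplit f hfU] at h
    exact Sym2.ext fun v => by rw [← Sym2.mem_toFinset, ← Sym2.mem_toFinset, h]

noncomputable def hingesOver (V : Finset α) (𝒳 : Finset (Finset α)) (W : Finset α) (k : ℕ) :
    Finset (Finset α) :=
  insert W ((theta V 𝒳 (k + 1)).filter (W ⊂ ·) ∪ (theta V 𝒳 (k + 2)).filter (W ⊂ ·))

section hingesOver

variable {V : Finset α} {𝒳 : Finset (Finset α)} {W : Finset α} {k : ℕ}

lemma mem_theta {U : Finset α} {j : ℕ} :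
    U ∈ theta V 𝒳 j ↔ U ⊆ V ∧ U.card = j ∧ 2 ≤ degX 𝒳 U := by
  rw [theta, mem_filter, mem_powerset]

lemma two_le_degX_of_mem_hingesOver (hW : W ∈ theta V 𝒳 k) {U : Finset α}
    (hU : U ∈ hingesOver V 𝒳 W k) : 2 ≤ degX 𝒳 U := by
  simp only [hingesOver, mem_insert, mem_union, mem_filter] at hU
  rcases hU with rfl | ⟨hU, -⟩ | ⟨hU, -⟩
  exacts [(mem_theta.mp hW).2.2, (mem_theta.mp hU).2.2, (mem_theta.mp hU).2.2]

lemma mem_hingesOver (hW : W ∈ theta V 𝒳 k) {U : Finset α} (hUV : U ⊆ V) (hWU : W ⊆ U)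
    (hUW : (U \ W).card ≤ 2) (hdeg : 2 ≤ degX 𝒳 U) : U ∈ hingesOver V 𝒳 W k := by
  have hcard : U.card = k + (U \ W).card := by
    rw [← (mem_theta.mp hW).2.1, ← card_sdiff_add_card_eq_card hWU, add_comm]
  simp only [hingesOver, mem_insert, mem_union, mem_filter, mem_theta]
  interval_cases h : (U \ W).card
  · exact Or.inl (hWU.antisymm' (sdiff_eq_empty_iff_subset.mp (card_eq_zero.mp h)))
  all_goals
    have hWU' : W ⊂ U := ssubset_of_subset_of_ne hWU (by rintro rfl; simp at h)
  · exact Or.inr (Or.inl ⟨⟨hUV, hcard, hdeg⟩, hWU'⟩)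
  · exact Or.inr (Or.inr ⟨⟨hUV, hcard, hdeg⟩, hWU'⟩)

lemma sum_hingesOver (hW : W ∈ theta V 𝒳 k) (f : Finset α → ℤ) :
    ∑ U ∈ hingesOver V 𝒳 W k, (k.choose (2 - (U \ W).card) : ℤ) * f U =
      (k.choose 2 : ℤ) * f W + k * ∑ U ∈ (theta V 𝒳 (k + 1)).filter (W ⊂ ·), f U +
        ∑ U ∈ (theta V 𝒳 (k + 2)).filter (W ⊂ ·), f U := by
  have hWk : W.card = k := (mem_theta.mp hW).2.1
  have hsdiff : ∀ j, ∀ U ∈ (theta V 𝒳 (k + j)).filter (W ⊂ ·), (U \ W).card = j := by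
    intro j U hU
    rw [mem_filter, mem_theta] at hU
    obtain ⟨⟨-, hU, -⟩, hWU⟩ := hU
    rw [card_sdiff_of_subset hWU.subset]
    omega
  have hdisj : Disjoint ((theta V 𝒳 (k + 1)).filter (W ⊂ ·))
      ((theta V 𝒳 (k + 2)).filter (W ⊂ ·)) :=
    disjoint_left.mpr fun U h1 h2 => by have := hsdiff 1 U h1; have := hsdiff 2 U h2; omega
  rw [hingesOver, sum_insert (by simp), sum_union hdisj, mul_sum, sdiff_self, bot_eq_empty,
    card_empty, add_assoc]
  congr 2
  · exact sum_congr rfl fun U hU => by rw [hsdiff 1 U hU, Nat.choose_one_right]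
  · exact sum_congr rfl fun U hU => by rw [hsdiff 2 U hU, Nat.choose_zero_right, Nat.cast_one,
      one_mul]

end hingesOver

lemma sum_degX_union_sub_one_le {V : Finset α} {E : Finset (Sym2 α)} (hval : ValidOn V E)
    {𝒳 : Finset (Finset α)} {W : Finset α} {k : ℕ} (hW : W ∈ theta V 𝒳 k)
    {F : Finset (Sym2 α)} (hF : F ⊆ E) :
    ∑ e ∈ F, ((degX 𝒳 (W ∪ e.toFinset) : ℤ) - 1) ≤
      ∑ U ∈ hingesOver V 𝒳 W k, (k.choose (2 - (U \ W).card) : ℤ) * ((degX 𝒳 U : ℤ) - 1) := by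
  set g : Sym2 α → Finset α := fun e => W ∪ e.toFinset
  set F₂ := F.filter fun e => 2 ≤ degX 𝒳 (g e)
  have hWk : W.card = k := (mem_theta.mp hW).2.1
  have hmaps : ∀ e ∈ F₂, g e ∈ hingesOver V 𝒳 W k := by
    intro e he
    obtain ⟨heF, hdeg⟩ := mem_filter.mp he
    have hcard : (g e \ W).card ≤ 2 := by
      rw [union_sdiff_left, ← Sym2.card_toFinset_of_not_isDiag e (hval e (hF heF)).1]
      exact card_le_card sdiff_subset
    refine mem_hingesOver hW (union_subset (mem_theta.mp hW).1 fun v hv => ?_)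
      subset_union_left hcard hdeg
    exact (hval e (hF heF)).2 v (Sym2.mem_toFinset.mp hv)
  calc ∑ e ∈ F, ((degX 𝒳 (g e) : ℤ) - 1)
      ≤ ∑ e ∈ F₂, ((degX 𝒳 (g e) : ℤ) - 1) := by
        rw [← sum_filter_add_sum_filter_not F fun e => 2 ≤ degX 𝒳 (g e)]
        refine add_le_of_nonpos_right (sum_nonpos fun e he => ?_)
        have := (mem_filter.mp he).2
        omega
    _ = ∑ U ∈ hingesOver V 𝒳 W k, ∑ e ∈ F₂.filter (g · = U), ((degX 𝒳 (g e) : ℤ) - 1) :=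
        (sum_fiberwise_of_maps_to hmaps _).symm
    _ = ∑ U ∈ hingesOver V 𝒳 W k, ((F₂.filter (g · = U)).card : ℤ) * ((degX 𝒳 U : ℤ) - 1) := by
        refine sum_congr rfl fun U _ => ?_
        rw [sum_congr rfl fun e he => by rw [(mem_filter.mp he).2], sum_const, nsmul_eq_mul]
    _ ≤ _ := by
        refine sum_le_sum fun U hU => mul_le_mul_of_nonneg_right ?_ ?_
        · rw [← hWk]
          exact_mod_cast (card_le_card (filter_subset_filter _ (filter_subset _ F))).trans
            (card_filter_union_toFinset_eq_le (fun e he => (hval e (hF he)).1) W U)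
        · have := two_le_degX_of_mem_hingesOver hW hU
          omega

/-- Since critical components of a sparse graph are induced subgraphs, the edge set of the
component with vertex set `X` is `inducedEdges E X`. -/
theorem stmt5_general (k : ℕ)
    (V : Finset α) (E : Finset (Sym2 α)) (hval : ValidOn V E)
    (𝒳 : Finset (Finset α))
    (W : Finset α) (hW : W ∈ theta V 𝒳 k)
    (t : ℕ) (ht : t = degX 𝒳 W) :
    (((𝒳.filter fun X => W ⊆ X).biUnion (fun X => inducedEdges E X)).card : ℤ) ≥
      (∑ X ∈ 𝒳.filter (fun X => W ⊆ X), (iG E X : ℤ)) -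
        (Nat.choose k 2 : ℤ) * ((t : ℤ) - 1) -
        (k : ℤ) *
          (∑ U ∈ (theta V 𝒳 (k + 1)).filter (fun X => W ⊂ X), ((degX 𝒳 U : ℤ) - 1)) -
        ∑ U ∈ (theta V 𝒳 (k + 2)).filter (fun X => W ⊂ X), ((degX 𝒳 U : ℤ) - 1) := by
  set ℰ := (𝒳.filter fun X => W ⊆ X).biUnion (fun X => inducedEdges E X)
  have hℰE : ℰ ⊆ E := biUnion_subset.mpr fun X _ => filter_subset _ E
  have hcount : ∑ X ∈ 𝒳.filter (fun X => W ⊆ X), (iG E X : ℤ) =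
      ∑ e ∈ ℰ, (degX 𝒳 (W ∪ e.toFinset) : ℤ) := by
    unfold iG
    exact_mod_cast (sum_card_eq_sum_card_filter_mem _ _).trans
      (sum_congr rfl fun e he => card_filter_mem_inducedEdges 𝒳 W (hℰE he))
  have hover := sum_degX_union_sub_one_le hval hW hℰE
  rw [sum_hingesOver hW, sum_sub_distrib, ← hcount] at hover
  simp only [sum_const, nsmul_eq_mul, mul_one] at hover
  rw [ht]
  linarith

/-- counting the edges of the union of the critical components containing a
fixed hinge `W` (inequality (2) of the paper).  Since critical components of a sparse graph
are induced subgraphs, the edge set of the component with vertex set `X` is the set of edges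
of `E` induced by `X`. -/
theorem stmt5 (d k : ℕ) (hd : 1 ≤ d) (hk : k ≤ d - 1)
    (V : Finset α) (E : Finset (Sym2 α)) (hval : ValidOn V E) (hsp : Sparse d V E)
    (𝒳 : Finset (Finset α)) (h𝒳 : 𝒳 = critCover d V E)
    (W : Finset α) (hW : W ∈ theta V 𝒳 k)
    (hbig : ∀ U F, CritComponent d V E U F → W ⊆ U → d + 2 ≤ U.card)
    (t : ℕ) (ht : t = degX 𝒳 W) :
    (((𝒳.filter fun X => W ⊆ X).biUnion (fun X => inducedEdges E X)).card : ℤ) ≥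
      (∑ X ∈ 𝒳.filter (fun X => W ⊆ X), (iG E X : ℤ)) -
        (Nat.choose k 2 : ℤ) * ((t : ℤ) - 1) -
        (k : ℤ) *
          (∑ U ∈ (theta V 𝒳 (k + 1)).filter (fun X => W ⊂ X), ((degX 𝒳 U : ℤ) - 1)) -
        ∑ U ∈ (theta V 𝒳 (k + 2)).filter (fun X => W ⊂ X), ((degX 𝒳 U : ℤ) - 1) :=
  stmt5_general k V E hval 𝒳 W hW t ht
end
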